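/- Let a, x ∈ S(0,∞) and C > 0. If K_u(x) ≤ C·K_u(a) for every u > 0, then μ(s; x) ≤ 3C·μ(s/(3C); a) for every s > 0. -/

import Mathlib

open MeasureTheory Filter Set
open scoped ENNReal NNReal

/-- Lebesgue measure on `(0, ∞)`. -/
noncomputable def mLeb : Measure ℝ := volume.restrict (Set.Ioi (0:ℝ))

/-- The distribution function `d_f(s) = m {t ∈ (0,∞) : |f t| > s}`. -/
noncomputable def distFun (f : ℝ → ℝ) (s : ℝ) : ℝ≥0∞ := mLeb {t | s < |f t|}

/-- `f ∈ S(0,∞)`: `f` is measurable and `d_f(s) < ∞` for some `s > 0`. -/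
def MemS (f : ℝ → ℝ) : Prop := Measurable f ∧ ∃ s > (0:ℝ), distFun f s < ⊤

/-- `‖g‖₀ = m (supp g)`, the `L₀`-group-norm. -/
noncomputable def norm0 (g : ℝ → ℝ) : ℝ≥0∞ := mLeb (Function.support g)

/-- `‖h‖∞`, the essential supremum norm on `(0,∞)`. -/
noncomputable def normInf (h : ℝ → ℝ) : ℝ≥0∞ := eLpNorm h ⊤ mLeb

/-- `g ∈ L₀(0,∞)`: measurable with support of finite measure. -/
def MemL0 (g : ℝ → ℝ) : Prop := Measurable g ∧ norm0 g < ⊤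

/-- `h ∈ L∞(0,∞)`: measurable and essentially bounded. -/
def MemLinf (h : ℝ → ℝ) : Prop := Measurable h ∧ normInf h < ⊤

/-- The K-functional `K_u(f) = inf {‖g‖₀ + u‖h‖∞ : f = g + h, g ∈ L₀, h ∈ L∞}`. -/
noncomputable def Kfun (u : ℝ) (f : ℝ → ℝ) : ℝ≥0∞ :=
  ⨅ (g : ℝ → ℝ) (h : ℝ → ℝ) (_ : MemL0 g) (_ : MemLinf h) (_ : f = g + h),
    norm0 g + ENNReal.ofReal u * normInf h

/-- The decreasing rearrangement `μ(t; f) = inf {s ≥ 0 : d_f(s) ≤ t}`. -/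
noncomputable def rearr (f : ℝ → ℝ) (t : ℝ) : ℝ :=
  sInf {s : ℝ | 0 ≤ s ∧ distFun f s ≤ ENNReal.ofReal t}

/-- The Δ-norm `‖f‖_S = inf_{s>0} [s + d_f(s)]`. -/
noncomputable def normS (f : ℝ → ℝ) : ℝ≥0∞ :=
  ⨅ (s : ℝ) (_ : 0 < s), ENNReal.ofReal s + distFun f s

/-!
Cutting `f` at height `τ` gives `K_u(f) ≤ d_f(τ) + uτ`. Conversely, in any decomposition
`f = g + h` either `‖h‖∞ ≤ r`, so that `d_f(r) ≤ ‖g‖₀`, or `u‖h‖∞ > ur`; hence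
`min (d_f(r), ur) ≤ K_u(f)`. If `d_a(τ) ≤ δ`, the choice `u = δ/τ` gives `K_u(a) ≤ 2δ`, so
`K_u(x) ≤ 2Cδ`; at `r = 3Cτ` the second term of the minimum is `3Cδ > 2Cδ`, which forces
`d_x(3Cτ) ≤ 3Cδ`. Taking `δ = s/(3C)` and `τ` just above `μ(δ; a)` gives the bound.
-/

open Topology

lemma distFun_antitone (f : ℝ → ℝ) : Antitone (distFun f) :=
  fun _ _ hst => measure_mono fun _ ht => lt_of_le_of_lt hst ht

lemma distFun_add_le (g k : ℝ → ℝ) (r : ℝ) :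
    distFun (g + k) r ≤ norm0 g + distFun k r := by
  refine (measure_mono fun t ht => ?_).trans (measure_union_le _ _)
  by_cases hg : g t = 0
  · right
    simpa [hg] using ht
  · exact Or.inl hg

lemma distFun_eq_zero_of_normInf_le {k : ℝ → ℝ} {r : ℝ} (hr : 0 ≤ r)
    (hk : normInf k ≤ ENNReal.ofReal r) : distFun k r = 0 := by
  rw [normInf, eLpNorm_exponent_top] at hk
  have hbound : ∀ᵐ t ∂mLeb, |k t| ≤ r := by
    filter_upwards [ae_le_eLpNormEssSup (f := k) (μ := mLeb)] with t ht
    replace ht := ht.trans hk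
    rwa [Real.enorm_eq_ofReal_abs, ENNReal.ofReal_le_ofReal_iff hr] at ht
  simpa only [distFun, not_le] using ae_iff.mp hbound

lemma Kfun_le {f g k : ℝ → ℝ} (hg : MemL0 g) (hk : MemLinf k) (hf : f = g + k) (u : ℝ) :
    Kfun u f ≤ norm0 g + ENNReal.ofReal u * normInf k :=
  iInf_le_of_le g <| iInf_le_of_le k <| iInf_le_of_le hg <| iInf_le_of_le hk <| iInf_le _ hf

lemma Kfun_le_distFun_add (f : ℝ → ℝ) (hf : Measurable f) (u : ℝ) {τ : ℝ} (hτ : 0 ≤ τ) :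
    Kfun u f ≤ distFun f τ + ENNReal.ofReal u * ENNReal.ofReal τ := by
  rcases eq_top_or_lt_top (distFun f τ) with htop | hfin
  · simp [htop]
  set S := {t | τ < |f t|}
  have hS : MeasurableSet S := measurableSet_lt measurable_const hf.abs
  have hnorm0 : norm0 (S.indicator f) ≤ distFun f τ := measure_mono support_indicator_subset
  have hnormInf : normInf (f - S.indicator f) ≤ ENNReal.ofReal τ := by
    rw [normInf, eLpNorm_exponent_top]
    refine eLpNormEssSup_le_of_ae_bound (Eventually.of_forall fun t => ?_)
    by_cases ht : t ∈ S
    · simp [ht, hτ]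
    · simpa [ht] using not_lt.mp ht
  calc Kfun u f ≤ norm0 (S.indicator f) + ENNReal.ofReal u * normInf (f - S.indicator f) :=
        Kfun_le ⟨hf.indicator hS, hnorm0.trans_lt hfin⟩
          ⟨hf.sub (hf.indicator hS), hnormInf.trans_lt ENNReal.ofReal_lt_top⟩
          (add_sub_cancel _ _).symm u
    _ ≤ _ := by gcongr

lemma min_distFun_le_Kfun (f : ℝ → ℝ) (u : ℝ) {r : ℝ} (hr : 0 ≤ r) :
    min (distFun f r) (ENNReal.ofReal u * ENNReal.ofReal r) ≤ Kfun u f := by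
  refine le_iInf fun g => le_iInf fun k => le_iInf fun _ => le_iInf fun _ =>
    le_iInf fun hf => ?_
  rcases le_or_gt (normInf k) (ENNReal.ofReal r) with hk | hk
  · calc min (distFun f r) _ ≤ distFun (g + k) r := hf ▸ min_le_left _ _
      _ ≤ norm0 g := by simpa [distFun_eq_zero_of_normInf_le hr hk] using distFun_add_le g k r
      _ ≤ _ := le_self_add
  · calc min _ (ENNReal.ofReal u * ENNReal.ofReal r) ≤ ENNReal.ofReal u * normInf k :=
          (min_le_right _ _).trans (by gcongr)
      _ ≤ _ := le_add_self

lemma MemS.tendsto_distFun_atTop {f : ℝ → ℝ} (hf : MemS f) :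
    Tendsto (distFun f) atTop (𝓝 0) := by
  obtain ⟨hm, s₀, -, hfin⟩ := hf
  have hempty : ⋂ σ : ℝ, {t | σ < |f t|} = ∅ :=
    eq_empty_of_forall_notMem fun t ht => lt_irrefl |f t| (mem_iInter.mp ht |f t|)
  have := tendsto_measure_iInter_atTop (μ := mLeb) (s := fun σ : ℝ => {t | σ < |f t|})
    (fun σ => (measurableSet_lt measurable_const hm.abs).nullMeasurableSet)
    (fun _ _ hst _ ht => lt_of_le_of_lt hst ht) ⟨s₀, hfin.ne⟩
  rwa [hempty, measure_empty] at this

lemma rearr_nonneg (f : ℝ → ℝ) (t : ℝ) : 0 ≤ rearr f t :=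
  Real.sInf_nonneg fun _ hσ => hσ.1

lemma rearr_le {f : ℝ → ℝ} {t σ : ℝ} (hσ : 0 ≤ σ) (hd : distFun f σ ≤ ENNReal.ofReal t) :
    rearr f t ≤ σ :=
  csInf_le ⟨0, fun _ hσ => hσ.1⟩ ⟨hσ, hd⟩

lemma MemS.distFun_le_of_rearr_lt {f : ℝ → ℝ} (hf : MemS f) {t τ : ℝ} (ht : 0 < t)
    (hτ : rearr f t < τ) : distFun f τ ≤ ENNReal.ofReal t := by
  obtain ⟨σ, hσ, hσt⟩ : ∃ σ : ℝ, 0 ≤ σ ∧ distFun f σ < ENNReal.ofReal t :=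
    ((eventually_ge_atTop 0).and (hf.tendsto_distFun_atTop.eventually
      (gt_mem_nhds (ENNReal.ofReal_pos.mpr ht)))).exists
  obtain ⟨σ, ⟨-, hσt⟩, hστ⟩ := exists_lt_of_csInf_lt
    (s := {σ | 0 ≤ σ ∧ distFun f σ ≤ ENNReal.ofReal t}) ⟨σ, hσ, hσt.le⟩ hτ
  exact (distFun_antitone f hστ.le).trans hσt

lemma distFun_le_of_Kfun_le {a x : ℝ → ℝ} (ha : Measurable a) {C : ℝ} (hC : 0 < C)
    (h : ∀ u > (0:ℝ), Kfun u x ≤ ENNReal.ofReal C * Kfun u a) {τ δ : ℝ} (hτ : 0 < τ)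
    (hδ : 0 < δ) (hda : distFun a τ ≤ ENNReal.ofReal δ) :
    distFun x (3 * C * τ) ≤ ENNReal.ofReal (3 * C * δ) := by
  set u := δ / τ
  have hu : 0 < u := div_pos hδ hτ
  have huτ : u * τ = δ := div_mul_cancel₀ δ hτ.ne'
  have hKa : Kfun u a ≤ ENNReal.ofReal (2 * δ) :=
    calc Kfun u a ≤ distFun a τ + ENNReal.ofReal u * ENNReal.ofReal τ :=
          Kfun_le_distFun_add a ha u hτ.le
      _ ≤ ENNReal.ofReal δ + ENNReal.ofReal δ := by
          rw [← ENNReal.ofReal_mul hu.le, huτ]; gcongr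
      _ = ENNReal.ofReal (2 * δ) := by rw [← ENNReal.ofReal_add hδ.le hδ.le, two_mul]
  have hKx : Kfun u x ≤ ENNReal.ofReal (2 * C * δ) :=
    calc Kfun u x ≤ ENNReal.ofReal C * ENNReal.ofReal (2 * δ) := (h u hu).trans (by gcongr)
      _ = ENNReal.ofReal (2 * C * δ) := by
          rw [← ENNReal.ofReal_mul hC.le, mul_left_comm, mul_assoc]
  have hmin := (min_distFun_le_Kfun x u (r := 3 * C * τ) (by positivity)).trans hKx
  rw [← ENNReal.ofReal_mul hu.le, show u * (3 * C * τ) = 3 * C * δ by rw [← huτ]; ring] at hmin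
  have hlt : ENNReal.ofReal (2 * C * δ) < ENNReal.ofReal (3 * C * δ) :=
    (ENNReal.ofReal_lt_ofReal_iff (by positivity)).mpr (by nlinarith [mul_pos hC hδ])
  rcases min_le_iff.mp hmin with hd | hd
  · exact hd.trans hlt.le
  · exact absurd hd hlt.not_ge

theorem stmt14_general (a x : ℝ → ℝ) (ha : MemS a) (C : ℝ) (hC : 0 < C)
    (h : ∀ u > (0:ℝ), Kfun u x ≤ ENNReal.ofReal C * Kfun u a) :
    ∀ s > (0:ℝ), rearr x s ≤ (3 * C) * rearr a (s / (3 * C)) := by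
  intro s hs
  have h3C : 0 < 3 * C := by positivity
  refine le_of_forall_gt_imp_ge_of_dense fun w hw => ?_
  have hτ : rearr a (s / (3 * C)) < w / (3 * C) := by rwa [lt_div_iff₀' h3C]
  have hτ0 : 0 < w / (3 * C) := (rearr_nonneg a _).trans_lt hτ
  have hda := ha.distFun_le_of_rearr_lt (div_pos hs h3C) hτ
  calc rearr x s ≤ 3 * C * (w / (3 * C)) := by
        refine rearr_le (by positivity) ?_
        simpa [mul_div_cancel₀ s h3C.ne'] using
          distFun_le_of_Kfun_le ha.1 hC h hτ0 (div_pos hs h3C) hda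
    _ = w := mul_div_cancel₀ w h3C.ne'

/-- if `K_u(x) ≤ C·K_u(a)` for every `u > 0`, then
`μ(s; x) ≤ 3C·μ(s/(3C); a)` for every `s > 0`. -/
theorem stmt14 (a x : ℝ → ℝ) (ha : MemS a) (hx : MemS x) (C : ℝ) (hC : 0 < C)
    (h : ∀ u > (0:ℝ), Kfun u x ≤ ENNReal.ofReal C * Kfun u a) :
    ∀ s > (0:ℝ), rearr x s ≤ (3 * C) * rearr a (s / (3 * C)) :=
  stmt14_general a x ha C hC h
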